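/- Let w, w̃ : Fin N → ℝ be strictly positive with |wᵢ − w̃ᵢ| ≤ ε for all i, and let ζ = maxᵢ w̃ᵢ/wᵢ. Then for every index i, wᵢ/(Σⱼ wⱼ) − w̃ᵢ/(Σⱼ w̃ⱼ) ≤ ((ζ−1)·wᵢ + ε)/(ζ·Σⱼ wⱼ). -/
import Mathlib

theorem stmt_3 (N : ℕ) (hN : 0 < N)
    (hne : (Finset.univ : Finset (Fin N)).Nonempty)
    (w wt : Fin N → ℝ) (hw : ∀ i, 0 < w i) (hwt : ∀ i, 0 < wt i)
    (ε : ℝ) (hε : 0 ≤ ε) (hclose : ∀ i, |w i - wt i| ≤ ε)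
    (ζ : ℝ) (hζ : ζ = Finset.univ.sup' hne (fun i => wt i / w i))
    (i : Fin N) :
    w i / (∑ j, w j) - wt i / (∑ j, wt j) ≤ ((ζ - 1) * w i + ε) / (ζ * ∑ j, w j) := by
  have hS : 0 < ∑ j, w j := Finset.sum_pos (fun j _ => hw j) hne
  have hSt : 0 < ∑ j, wt j := Finset.sum_pos (fun j _ => hwt j) hne
  have hζi : ∀ j, wt j / w j ≤ ζ := fun j => hζ ▸ Finset.le_sup' (fun k => wt k / w k) (Finset.mem_univ j)
  have hζpos : 0 < ζ := lt_of_lt_of_le (div_pos (hwt i) (hw i)) (hζi i)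
  have hmul : ∀ j, wt j ≤ ζ * w j := fun j => by
    have := (div_le_iff₀ (hw j)).mp (hζi j); linarith
  have hSle : ∑ j, wt j ≤ ζ * ∑ j, w j := by
    rw [Finset.mul_sum]; exact Finset.sum_le_sum fun j _ => hmul j
  have h1 : wt i / (ζ * ∑ j, w j) ≤ wt i / (∑ j, wt j) :=
    div_le_div_of_nonneg_left (le_of_lt (hwt i)) hSt hSle
  have h2 : w i / (∑ j, w j) = ζ * w i / (ζ * ∑ j, w j) := by
    rw [mul_div_mul_left _ _ (ne_of_gt hζpos)]
  have h3 : abs (w i - wt i) ≤ ε := hclose i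
  have h4 : w i - wt i ≤ ε := le_trans (le_abs_self _) h3
  calc w i / (∑ j, w j) - wt i / (∑ j, wt j)
      ≤ ζ * w i / (ζ * ∑ j, w j) - wt i / (ζ * ∑ j, w j) := by
        rw [← h2]; linarith
    _ = (ζ * w i - wt i) / (ζ * ∑ j, w j) := by ring
    _ ≤ ((ζ - 1) * w i + ε) / (ζ * ∑ j, w j) := by
        have hd : (0:ℝ) ≤ ζ * ∑ j, w j := le_of_lt (mul_pos hζpos hS)
        gcongr
        linarith
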